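/- Let n = 3k with k odd, F the finite field with 2^n elements, i a positive integer with gcd(i,n) = 1, and f : F → F the Gold function f(x) = x^(2^i+1). Let ξ ∈ F satisfy ξ^8 = ξ with ξ ≠ 0 and ξ ≠ 1 (so ξ is a primitive element of F_{2^3}), and let μ, ν ∈ F be nonzero. Set Y = { ( ν·(b + b^(2^(n−i))) , ν^(2^i+1)·b ) : b ∈ F }, let S be the 𝔽₂-span of {μ, ξμ} in F, let X = { x ∈ F : Tr(a·x) = 0 for all a ∈ S^(−1/(2^i+1)) }, and set Z = X × S. Let c ∈ F be the unique element with c^(2^i+1) = μ. If Tr( (ξ + ξ^(2^i)) · c^(2^i) · ν^(−2^i) ) = 1, then Y and Z are WZ spaces of f and Y ∩ Z = {(0,0)}. -/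

import Mathlib

noncomputable instance (n : ℕ) : Fintype (GaloisField 2 n) := Fintype.ofFinite _

/-- The absolute trace from `GF(2^n)` to `𝔽₂`. -/
noncomputable def Tr (n : ℕ) : GaloisField 2 n → ZMod 2 :=
  Algebra.trace (ZMod 2) (GaloisField 2 n)

/-- The Walsh transform of `f : GF(2^n) → GF(2^n)` at `(a, b)`. -/
noncomputable def W (n : ℕ) (f : GaloisField 2 n → GaloisField 2 n)
    (a b : GaloisField 2 n) : ℤ :=
  ∑ x : GaloisField 2 n, (-1) ^ (Tr n (a * x + b * f x)).val

/-- A WZ space of `f`: an `𝔽₂`-subspace of `GF(2^n) × GF(2^n)` of dimension `n`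
all of whose nonzero elements are Walsh zeros of `f`. -/
def IsWZSpace (n : ℕ) (f : GaloisField 2 n → GaloisField 2 n)
    (S : Submodule (ZMod 2) (GaloisField 2 n × GaloisField 2 n)) : Prop :=
  Module.finrank (ZMod 2) S = n ∧
    ∀ p ∈ S, p ≠ (0 : GaloisField 2 n × GaloisField 2 n) → W n f p.1 p.2 = 0

namespace Aux

abbrev F (n : ℕ) := GaloisField 2 n

/-! ### Trace lemmas -/

/-- Frobenius as an algebra equivalence over ZMod 2. -/
noncomputable def frobAE (n : ℕ) : F n ≃ₐ[ZMod 2] F n :=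
  AlgEquiv.ofBijective
    { toRingHom := frobenius (F n) 2
      commutes' := fun r => by
        show (algebraMap (ZMod 2) (F n) r) ^ 2 = _
        rw [← map_pow, ZMod.pow_card] }
    ((Finite.injective_iff_bijective).mp (frobenius_inj (F n) 2))

lemma frobAE_apply {n : ℕ} (x : F n) : frobAE n x = x ^ 2 := rfl

lemma Tr_sq {n : ℕ} (x : F n) : Tr n (x ^ 2) = Tr n x := by
  have := Algebra.trace_eq_of_algEquiv (frobAE n) x
  rw [frobAE_apply] at this
  exact this

lemma Tr_pow2 {n : ℕ} (m : ℕ) (x : F n) : Tr n (x ^ (2 ^ m)) = Tr n x := by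
  induction m with
  | zero => simp
  | succ m ih => rw [pow_succ, pow_mul, Tr_sq, ih]

lemma Tr_add {n : ℕ} (x y : F n) : Tr n (x + y) = Tr n x + Tr n y :=
  map_add (Algebra.trace (ZMod 2) (F n)) x y

lemma Tr_zero {n : ℕ} : Tr n (0 : F n) = 0 := map_zero (Algebra.trace (ZMod 2) (F n))

lemma Tr_one {n : ℕ} (hn : Odd n) : Tr n (1 : F n) = 1 := by
  have h1 : Tr n (1 : F n) = Module.finrank (ZMod 2) (F n) • (1 : ZMod 2) := by
    have := Algebra.trace_algebraMap (S := F n) (1 : ZMod 2)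
    rwa [map_one] at this
  rw [h1, GaloisField.finrank 2 (by rintro rfl; exact absurd (Nat.odd_iff.mp hn) (by norm_num))]
  obtain ⟨m, rfl⟩ := hn
  rw [nsmul_eq_mul, mul_one]
  simp only [Nat.cast_add, Nat.cast_mul, Nat.cast_ofNat, Nat.cast_one]
  have : ((2:ZMod 2)) = 0 := by decide
  rw [this]; ring

/-! ### Cardinality and power injectivity -/

lemma card_F {n : ℕ} (hn : n ≠ 0) : Nat.card (F n) = 2 ^ n := GaloisField.card 2 n hn

lemma pow_card {n : ℕ} (hn : n ≠ 0) (x : F n) : x ^ (2 ^ n) = x := by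
  letI : Fintype (F n) := Fintype.ofFinite _
  rw [← card_F hn, Nat.card_eq_fintype_card]; exact FiniteField.pow_card x

lemma coprime_aux {i n : ℕ} (hodd : Odd n) (hgcd : Nat.gcd i n = 1) :
    Nat.Coprime (2 ^ i + 1) (2 ^ n - 1) := by
  set d := Nat.gcd (2 ^ i + 1) (2 ^ n - 1) with hd
  have hdvd1 : d ∣ 2 ^ (2 * i) - 1 := by
    refine (Nat.gcd_dvd_left _ _).trans ?_
    have h1 : 1 ≤ 2 ^ i := Nat.one_le_two_pow
    have e2 : 2 ^ (2*i) = 2 ^ i * 2 ^ i := by rw [two_mul, pow_add]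
    have e3 : (2 ^ i + 1) * (2 ^ i - 1) = (2^i+1) * 2^i - (2^i+1) := by
      rw [Nat.mul_sub, mul_one]
    have e4 : (2^i+1) * 2^i = 2^i*2^i + 2^i := by ring
    exact ⟨2^i - 1, by omega⟩
  have hdvd2 : d ∣ 2 ^ n - 1 := Nat.gcd_dvd_right _ _
  have h2i : (2 : ZMod d) ^ (2 * i) = 1 := by
    have h1 : 1 ≤ 2 ^ (2*i) := Nat.one_le_two_pow
    have hcast : ((2 ^ (2*i) - 1 : ℕ) : ZMod d) = 0 :=
      (ZMod.natCast_eq_zero_iff _ _).mpr hdvd1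
    push_cast [Nat.cast_sub h1] at hcast
    linear_combination hcast
  have hpn : (2 : ZMod d) ^ n = 1 := by
    have h1 : 1 ≤ 2 ^ n := Nat.one_le_two_pow
    have hcast : ((2 ^ n - 1 : ℕ) : ZMod d) = 0 :=
      (ZMod.natCast_eq_zero_iff _ _).mpr hdvd2
    push_cast [Nat.cast_sub h1] at hcast
    linear_combination hcast
  have hg : Nat.gcd (2 * i) n = 1 := Nat.Coprime.mul hodd.coprime_two_left hgcd
  have h21 := (pow_gcd_eq_one (a := (2 : ZMod d))).mpr ⟨h2i, hpn⟩
  rw [hg, pow_one] at h21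
  have h21' : ((2 : ℕ) : ZMod d) = ((1 : ℕ) : ZMod d) := by push_cast; exact h21
  have := (Nat.modEq_iff_dvd' (by norm_num)).mp ((ZMod.natCast_eq_natCast_iff _ _ _).mp h21').symm
  simpa using Nat.dvd_one.mp (by simpa using this)

lemma pow_inj {i n : ℕ} (hodd : Odd n) (hgcd : Nat.gcd i n = 1)
    {x y : F n} (h : x ^ (2 ^ i + 1) = y ^ (2 ^ i + 1)) : x = y := by
  have hn0 : n ≠ 0 := by rintro rfl; exact absurd (Nat.odd_iff.mp hodd) (by norm_num)
  have hm0 : (2^i + 1) ≠ 0 := by positivity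
  rcases eq_or_ne y 0 with rfl | hy
  · rw [zero_pow hm0] at h
    exact pow_eq_zero_iff hm0 |>.mp h
  rcases eq_or_ne x 0 with rfl | hx
  · rw [zero_pow hm0] at h
    exact absurd (pow_eq_zero_iff (n := 2^i+1) hm0 |>.mp h.symm) hy
  · have hz : (x * y⁻¹) ^ (2 ^ i + 1) = 1 := by
      rw [mul_pow, h, inv_pow, mul_inv_cancel₀ (pow_ne_zero _ hy)]
    set z : (F n)ˣ := Units.mk0 (x * y⁻¹) (mul_ne_zero hx (inv_ne_zero hy)) with hzdef
    have hz' : z ^ (2 ^ i + 1) = 1 :=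
      Units.ext (by rw [Units.val_pow_eq_pow_val, Units.val_one]; exact hz)
    have h1 : orderOf z ∣ 2 ^ i + 1 := orderOf_dvd_of_pow_eq_one hz'
    have h2 : orderOf z ∣ 2 ^ n - 1 := by
      have := orderOf_dvd_natCard z
      rwa [Nat.card_units, card_F hn0] at this
    have h3 : orderOf z ∣ 1 := by
      have := Nat.dvd_gcd h1 h2
      rwa [coprime_aux hodd hgcd] at this
    have hz1 : z = 1 := orderOf_eq_one_iff.mp (Nat.dvd_one.mp h3)
    have hxy : x * y⁻¹ = (1 : F n) := by
      have := congrArg Units.val hz1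
      simpa [hzdef] using this
    field_simp at hxy
    exact hxy

/-! ### Character sum lemmas -/

lemma neg_one_pow_succ (t : ZMod 2) : ((-1 : ℤ)) ^ ((t + 1).val) = -((-1) ^ t.val) := by
  revert t; decide

lemma sum_shift {n : ℕ} (G : F n → ZMod 2) (x0 : F n)
    (hshift : ∀ x, G (x + x0) = G x + 1) :
    ∑ x : F n, ((-1 : ℤ)) ^ (G x).val = 0 := by
  have key : ∑ x : F n, ((-1:ℤ)) ^ (G (x + x0)).val = ∑ x : F n, ((-1:ℤ)) ^ (G x).val :=
    Fintype.sum_equiv (Equiv.addRight x0) _ _ (fun x => rfl)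
  simp only [hshift, neg_one_pow_succ] at key
  rw [Finset.sum_neg_distrib] at key; linarith

lemma walsh_a {n i : ℕ} (hodd : Odd n) (f : F n → F n) (hf : ∀ x, f x = x ^ (2^i+1))
    {a : F n} (ha : a ≠ 0) : W n f a 0 = 0 := by
  rw [W]
  have h0 : ∀ x : F n, Tr n (a * x + 0 * f x) = Tr n (a * x) := by
    intro x; rw [zero_mul, add_zero]
  simp only [h0]
  refine sum_shift (fun x => Tr n (a * x)) a⁻¹ (fun x => ?_)
  show Tr n (a * (x + a⁻¹)) = Tr n (a * x) + 1
  rw [mul_add, Tr_add, mul_inv_cancel₀ ha, Tr_one hodd]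

lemma walsh_b {n i : ℕ} (hodd : Odd n) (f : F n → F n) (hf : ∀ x, f x = x ^ (2^i+1))
    (g : F n → F n) (hg : ∀ y, g y ^ (2^i+1) = y⁻¹)
    {a b : F n} (hb : b ≠ 0) (hTr : Tr n (a * g b) = 0) : W n f a b = 0 := by
  set d := g b with hdd
  have hd0 : d ≠ 0 := by
    intro h
    have h2 : d ^ (2^i+1) = b⁻¹ := hg b
    rw [h, zero_pow (by positivity)] at h2
    exact hb (inv_eq_zero.mp h2.symm)
  have hbdm : b * d ^ (2^i+1) = 1 := by rw [hg b, mul_inv_cancel₀ hb]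
  have hbval : b = (d ^ (2^i+1))⁻¹ := by
    field_simp at hbdm ⊢
    linear_combination hbdm
  have hcross : ∀ x : F n, Tr n (b * (x^(2^i) * d)) = Tr n (b * (d^(2^i) * x)) := by
    intro x
    have e1 : b * (x^(2^i) * d) = (d⁻¹ * x)^(2^i) := by
      rw [hbval, mul_pow, inv_pow, pow_succ]
      field_simp
    have e2 : b * (d^(2^i) * x) = d⁻¹ * x := by
      rw [hbval, pow_succ]
      field_simp
    rw [e1, e2, Tr_pow2]
  rw [W]
  simp only [hf]
  refine sum_shift (fun x => Tr n (a * x + b * x^(2^i+1))) d (fun x => ?_)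
  show Tr n (a * (x + d) + b * (x + d)^(2^i+1)) = Tr n (a * x + b * x^(2^i+1)) + 1
  have hpow : (x+d)^(2^i+1) = x^(2^i+1) + (x^(2^i)*d + (d^(2^i)*x + d^(2^i+1))) := by
    rw [pow_succ, add_pow_char_pow, pow_succ, pow_succ]; ring
  have e : a * (x + d) + b * (x + d)^(2^i+1)
      = (a*x + b*x^(2^i+1)) + ((a*d) + ((b*(x^(2^i)*d) + b*(d^(2^i)*x)) + b*d^(2^i+1))) := by
    rw [hpow]; ring
  rw [e, hbdm, Tr_add, Tr_add, Tr_add, Tr_add]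
  rw [show Tr n (a*d) = 0 from hTr, Tr_add, hcross x, CharTwo.add_self_eq_zero, Tr_one hodd]
  ring


lemma zmod2_cases (c : ZMod 2) : c = 0 ∨ c = 1 := by revert c; decide

/-- Build a `ZMod 2`-linear map from an additive map. -/
def mkLin {M N : Type*} [AddCommGroup M] [AddCommGroup N] [Module (ZMod 2) M]
    [Module (ZMod 2) N] (f : M → N) (hadd : ∀ x y, f (x + y) = f x + f y) :
    M →ₗ[ZMod 2] N where
  toFun := f
  map_add' := hadd
  map_smul' c x := by
    rcases zmod2_cases c with rfl | rfl
    · have h0 : f 0 = 0 := by have := hadd 0 0; simpa using this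
      simp [h0]
    · simp

@[simp] lemma mkLin_apply {M N : Type*} [AddCommGroup M] [AddCommGroup N] [Module (ZMod 2) M]
    [Module (ZMod 2) N] (f : M → N) (hadd) (x : M) : mkLin f hadd x = f x := rfl

/-- A product of submodules is equivalent to the product of them as modules. -/
def prodSubEquiv {R M N : Type*} [Ring R] [AddCommGroup M] [AddCommGroup N] [Module R M]
    [Module R N] (p : Submodule R M) (q : Submodule R N) : (p.prod q) ≃ₗ[R] (p × q) where
  toFun x := (⟨x.1.1, x.2.1⟩, ⟨x.1.2, x.2.2⟩)
  invFun y := ⟨(y.1.1, y.2.1), ⟨y.1.2, y.2.2⟩⟩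
  map_add' a b := rfl
  map_smul' c a := rfl
  left_inv a := rfl
  right_inv a := rfl

lemma pow_pow_mod3 {K : Type*} [Monoid K] {x : K} (hx : x ^ 8 = x) (m : ℕ) :
    x ^ (2 ^ m) = x ^ (2 ^ (m % 3)) := by
  have h8 : ∀ q, x ^ (8 ^ q) = x := by
    intro q
    induction q with
    | zero => simp
    | succ q ih => rw [pow_succ, pow_mul, ih, hx]
  conv_lhs => rw [show m = 3 * (m / 3) + m % 3 from by omega]
  rw [pow_add, pow_mul]
  congr 1
  rw [show (2:ℕ) ^ (3 * (m/3)) = 8 ^ (m/3) from by rw [pow_mul]; norm_num, h8]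

lemma span_pair_cases {M : Type*} [AddCommGroup M] [Module (ZMod 2) M] (a b s : M)
    (hs : s ∈ Submodule.span (ZMod 2) {a, b}) : s = 0 ∨ s = a ∨ s = b ∨ s = a + b := by
  obtain ⟨x, y, hxy⟩ := Submodule.mem_span_pair.mp hs
  rcases zmod2_cases x with rfl | rfl <;> rcases zmod2_cases y with rfl | rfl <;>
    simp only [zero_smul, one_smul, zero_add, add_zero] at hxy
  · exact Or.inl hxy.symm
  · exact Or.inr (Or.inr (Or.inl hxy.symm))
  · exact Or.inr (Or.inl hxy.symm)
  · exact Or.inr (Or.inr (Or.inr hxy.symm))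


end Aux
set_option maxHeartbeats 2000000 in
open Aux in
/-- For `n = 3k` with `k` odd, `gcd(i,n) = 1`, `ξ` a primitive element of `F_{2^3}`
(i.e. `ξ^8 = ξ`, `ξ ≠ 0, 1`), nonzero `μ, ν`, `c` the unique element with
`c^(2^i+1) = μ`, and assuming `Tr((ξ + ξ^(2^i))·μ^(2^i/(2^i+1))·ν^(−2^i)) = 1`, the
sets `Y = {(ν·(b + b^(1/2^i)), ν^(2^i+1)·b) : b ∈ F}` and `Z = X × S`, where
`S = span_{𝔽₂}{μ, ξμ}` and `X = {x : Tr(a·x) = 0 for all a ∈ S^(−1/(2^i+1))}`,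
are WZ spaces of the Gold function `f(x) = x^(2^i+1)` that intersect trivially.
Here `g` is the map `y ↦ y^(−1/(2^i+1))`, characterized by `(g y)^(2^i+1) = y⁻¹`
(with `0⁻¹ = 0`), and `μ^(2^i/(2^i+1)) = c^(2^i)`. -/
theorem stmt16 (n i k : ℕ) (hk : Odd k) (hn : n = 3 * k) (hi : 0 < i) (hin : i ≤ n)
    (hgcd : Nat.gcd i n = 1)
    (f : GaloisField 2 n → GaloisField 2 n) (hf : ∀ x, f x = x ^ (2 ^ i + 1))
    (g : GaloisField 2 n → GaloisField 2 n) (hg : ∀ y, (g y) ^ (2 ^ i + 1) = y⁻¹)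
    (ξ μ ν c : GaloisField 2 n) (hξ : ξ ^ 8 = ξ) (hξ0 : ξ ≠ 0) (hξ1 : ξ ≠ 1)
    (hμ : μ ≠ 0) (hν : ν ≠ 0) (hc : c ^ (2 ^ i + 1) = μ)
    (htr : Tr n ((ξ + ξ ^ (2 ^ i)) * c ^ (2 ^ i) * (ν ^ (2 ^ i))⁻¹) = 1) :
    ∃ (Y Z : Submodule (ZMod 2) (GaloisField 2 n × GaloisField 2 n)),
      (Y : Set (GaloisField 2 n × GaloisField 2 n)) =
        Set.range (fun b : GaloisField 2 n =>
          (ν * (b + b ^ (2 ^ (n - i))), ν ^ (2 ^ i + 1) * b)) ∧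
      (Z : Set (GaloisField 2 n × GaloisField 2 n)) =
        {x : GaloisField 2 n |
            ∀ a ∈ g '' ((Submodule.span (ZMod 2) {μ, ξ * μ} :
                Submodule (ZMod 2) (GaloisField 2 n)) : Set (GaloisField 2 n)),
              Tr n (a * x) = 0} ×ˢ
          ((Submodule.span (ZMod 2) {μ, ξ * μ} :
              Submodule (ZMod 2) (GaloisField 2 n)) : Set (GaloisField 2 n)) ∧
      IsWZSpace n f Y ∧ IsWZSpace n f Z ∧
      ((Y : Set (GaloisField 2 n × GaloisField 2 n)) ∩
          (Z : Set (GaloisField 2 n × GaloisField 2 n)) =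
        {((0 : GaloisField 2 n), (0 : GaloisField 2 n))}) := by
  classical
  have hodd : Odd n := by rw [hn]; exact (by decide : Odd 3).mul hk
  have hn0 : n ≠ 0 := by rintro rfl; exact absurd (Nat.odd_iff.mp hodd) (by norm_num)
  have hn3 : 3 ≤ n := by
    obtain ⟨j, rfl⟩ := hk; omega
  have hm0 : (2 ^ i + 1) ≠ 0 := by positivity
  have h2F : (2 : GaloisField 2 n) = 0 := by
    have := CharP.cast_eq_zero (GaloisField 2 n) 2; exact_mod_cast this
  have hc0 : c ≠ 0 := by
    intro h; apply hμ; rw [← hc, h, zero_pow hm0]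
  have h1ξ : (1 : GaloisField 2 n) + ξ ≠ 0 := by
    intro h; apply hξ1
    linear_combination -h + ξ * h2F - h2F + h2F  -- ξ = 1 from 1 + ξ = 0 and 2 = 0
  -- basic elements d1 = g μ = c⁻¹, d2 = g (ξμ), u = c * d2
  have hgμ : g μ = c⁻¹ := pow_inj hodd hgcd (by rw [hg, ← hc, inv_pow])
  have hg0 : g 0 = 0 := by
    have h0 := hg (0 : GaloisField 2 n)
    rw [inv_zero] at h0
    exact pow_eq_zero_iff hm0 |>.mp h0
  set d2 := g (ξ * μ) with hd2def
  have hξμ0 : ξ * μ ≠ 0 := mul_ne_zero hξ0 hμ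
  have hd2m : d2 ^ (2 ^ i + 1) = (ξ * μ)⁻¹ := hg _
  have hd2_0 : d2 ≠ 0 := by
    intro h; rw [h, zero_pow hm0] at hd2m
    exact hξμ0 (inv_eq_zero.mp hd2m.symm)
  set u := c * d2 with hudef
  have hum : u ^ (2 ^ i + 1) = ξ⁻¹ := by
    rw [hudef, mul_pow, hc, hd2m, mul_inv]
    field_simp
  have hu0 : u ≠ 0 := mul_ne_zero hc0 hd2_0
  have hu8 : u ^ 8 = u := by
    apply pow_inj hodd hgcd
    rw [← pow_mul, mul_comm, pow_mul, hum, inv_pow, hξ]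
  have hu7 : u ^ 7 = 1 := by
    have h8 : u ^ 7 * u = 1 * u := by rw [← pow_succ, one_mul]; exact hu8
    exact mul_right_cancel₀ hu0 h8
  have hu1 : u ≠ 1 := by
    intro h; rw [h, one_pow] at hum
    exact hξ1 (by rw [← inv_inv ξ, ← hum, inv_one])
  have h1u : (1 : GaloisField 2 n) + u ≠ 0 := by
    intro h; apply hu1
    linear_combination -h + u * h2F
  have hS : u ^ 6 + u ^ 5 + u ^ 4 + u ^ 3 + u ^ 2 + u + 1 = 0 := by
    have hfac : (u - 1) * (u ^ 6 + u ^ 5 + u ^ 4 + u ^ 3 + u ^ 2 + u + 1) = u ^ 7 - 1 := by ring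
    have h0 : (u - 1) * (u ^ 6 + u ^ 5 + u ^ 4 + u ^ 3 + u ^ 2 + u + 1) = 0 := by
      rw [hfac, hu7, sub_self]
    rcases mul_eq_zero.mp h0 with h | h
    · exact ((hu1 (sub_eq_zero.mp h))).elim
    · exact h
  have h3i : ¬ (3 ∣ i) := by
    intro h
    have h3n : (3 : ℕ) ∣ n := ⟨k, hn⟩
    have := Nat.dvd_gcd h h3n
    rw [hgcd] at this
    have := Nat.le_of_dvd one_pos this
    omega
  have hj : i % 3 = 1 ∨ i % 3 = 2 := by omega
  have hinv3 : ∀ r s : ℕ, r + s = 7 → (u ^ r)⁻¹ = u ^ s := by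
    intro r s hrs
    apply inv_eq_of_mul_eq_one_right
    rw [← pow_add, hrs, hu7]
  have hxiu : ξ = (u ^ (2 ^ (i % 3) + 1))⁻¹ := by
    rw [← inv_inv ξ]
    congr 1
    rw [← hum, pow_succ, pow_succ, pow_pow_mod3 hu8 i]
  have hξi : ξ ^ (2 ^ i) = ξ ^ (2 ^ (i % 3)) := pow_pow_mod3 hξ i
  have hkey2 : u + u ^ (2 ^ (2 * i)) = ξ + ξ ^ (2 ^ i) := by
    rw [pow_pow_mod3 hu8 (2 * i), hξi]
    rcases hj with hj | hj
    · rw [hj, show (2 * i) % 3 = 2 from by omega]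
      have hξval : ξ = u ^ 4 := by
        rw [hxiu, hj, show (2:ℕ) ^ 1 + 1 = 3 from rfl, hinv3 3 4 rfl]
      rw [hξval, show (2:ℕ) ^ 2 = 4 from rfl, show (2:ℕ) ^ 1 = 2 from rfl, ← pow_mul,
        show 4 * 2 = 8 from rfl, hu8]
      ring
    · rw [hj, show (2 * i) % 3 = 1 from by omega]
      have hξval : ξ = u ^ 2 := by
        rw [hxiu, hj, show (2:ℕ) ^ 2 + 1 = 5 from rfl, hinv3 5 2 rfl]
      rw [hξval, show (2:ℕ) ^ 1 = 2 from rfl, show (2:ℕ) ^ 2 = 4 from rfl, ← pow_mul,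
        show 2 * 4 = 8 from rfl, hu8]
      ring
  have hI1 : (1 + u) ^ (2 ^ i + 1) * (1 + ξ) = 1 := by
    have e : (1 + u) ^ (2 ^ i + 1) = (1 + u ^ (2 ^ (i % 3))) * (1 + u) := by
      rw [pow_succ, add_pow_char_pow, one_pow, pow_pow_mod3 hu8 i]
    rw [e]
    rcases hj with hj | hj
    · have hξval : ξ = u ^ 4 := by
        rw [hxiu, hj, show (2:ℕ) ^ 1 + 1 = 3 from rfl, hinv3 3 4 rfl]
      rw [hj, hξval, show (2:ℕ) ^ 1 = 2 from rfl]
      linear_combination hS + hu7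
    · have hξval : ξ = u ^ 2 := by
        rw [hxiu, hj, show (2:ℕ) ^ 2 + 1 = 5 from rfl, hinv3 5 2 rfl]
      rw [hj, hξval, show (2:ℕ) ^ 2 = 4 from rfl]
      linear_combination hS + hu7
  have hμξμ0 : μ + ξ * μ ≠ 0 := by
    intro h
    apply h1ξ
    have : (1 + ξ) * μ = 0 := by linear_combination h
    rcases mul_eq_zero.mp this with h' | h'
    · exact h'
    · exact (hμ h').elim
  have hd2u : d2 = c⁻¹ * u := by rw [hudef]; field_simp
  have hd3 : g (μ + ξ * μ) = c⁻¹ + d2 := by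
    apply pow_inj hodd hgcd
    rw [hg]
    have e1 : c⁻¹ + d2 = c⁻¹ * (1 + u) := by rw [hd2u]; ring
    have e2 : (1 + u) ^ (2 ^ i + 1) = (1 + ξ)⁻¹ := eq_inv_of_mul_eq_one_right (by linear_combination hI1)
    rw [e1, mul_pow, inv_pow, hc, e2, ← mul_inv]
    congr 1
    ring
  -- the parameter T = c/ν
  set T : GaloisField 2 n := c * ν⁻¹ with hTdef
  have hT0 : T ≠ 0 := mul_ne_zero hc0 (inv_ne_zero hν)
  have htr' : Tr n ((ξ + ξ ^ (2 ^ i)) * T ^ (2 ^ i)) = 1 := by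
    have e : (ξ + ξ ^ (2 ^ i)) * c ^ (2 ^ i) * (ν ^ (2 ^ i))⁻¹
        = (ξ + ξ ^ (2 ^ i)) * T ^ (2 ^ i) := by
      rw [hTdef, mul_pow, inv_pow]; ring
    rw [← e]; exact htr
  have hTn : T ^ (2 ^ n) = T := pow_card hn0 T
  have hexpT : (T ^ (2 ^ i + 1)) ^ (2 ^ (n - i)) = T * T ^ (2 ^ (n - i)) := by
    have he : (2 ^ i + 1) * 2 ^ (n - i) = 2 ^ n + 2 ^ (n - i) := by
      rw [add_mul, one_mul, ← pow_add]
      congr 2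
      omega
    rw [← pow_mul, he, pow_add, hTn]
  have hcν : c⁻¹ * ν = T⁻¹ := by rw [hTdef, mul_inv, inv_inv]
  have halg : ∀ σ : GaloisField 2 n,
      c⁻¹ * (ν * (σ * T ^ (2 ^ i + 1) + (σ * T ^ (2 ^ i + 1)) ^ (2 ^ (n - i))))
        = σ * T ^ (2 ^ i) + (σ * T) ^ (2 ^ (n - i)) := by
    intro σ
    rw [mul_pow σ, hexpT, ← mul_assoc, hcν, mul_pow σ T]
    rw [pow_succ]
    field_simp
  have htrs : ∀ σ : GaloisField 2 n,
      Tr n (σ * T ^ (2 ^ i) + (σ * T) ^ (2 ^ (n - i)))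
        = Tr n ((σ + σ ^ (2 ^ i)) * T ^ (2 ^ i)) := by
    intro σ
    rw [Tr_add, Tr_pow2 (n - i) (σ * T), ← Tr_pow2 i (σ * T), mul_pow, ← Tr_add]
    congr 1
    ring
  -- the span S2 and the submodule X
  set S2 : Submodule (ZMod 2) (GaloisField 2 n) := Submodule.span (ZMod 2) {μ, ξ * μ}
    with hS2def
  have hμS : μ ∈ S2 := Submodule.subset_span (by simp)
  have hξμS : ξ * μ ∈ S2 := Submodule.subset_span (by simp)
  have hsumS : μ + ξ * μ ∈ S2 := S2.add_mem hμS hξμS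
  set X : Submodule (ZMod 2) (GaloisField 2 n) :=
    { carrier := {x : GaloisField 2 n |
        ∀ a ∈ g '' (S2 : Set (GaloisField 2 n)), Tr n (a * x) = 0}
      add_mem' := by
        intro x y hx hy a ha
        rw [mul_add, Tr_add, hx a ha, hy a ha, add_zero]
      zero_mem' := by
        intro a ha
        rw [mul_zero, Tr_zero]
      smul_mem' := by
        intro cc x hx
        rcases zmod2_cases cc with rfl | rfl
        · intro a ha; rw [zero_smul, mul_zero, Tr_zero]
        · intro a ha; rw [one_smul]; exact hx a ha } with hXdef
  have hXmem : ∀ x : GaloisField 2 n,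
      x ∈ X ↔ ∀ a ∈ g '' (S2 : Set (GaloisField 2 n)), Tr n (a * x) = 0 := fun x => Iff.rfl
  -- the map φY and the submodule Y
  set φY : GaloisField 2 n →ₗ[ZMod 2] GaloisField 2 n × GaloisField 2 n :=
    mkLin (fun b => (ν * (b + b ^ (2 ^ (n - i))), ν ^ (2 ^ i + 1) * b))
      (by
        intro x y
        simp only [Prod.mk_add_mk, Prod.mk.injEq]
        constructor
        · rw [add_pow_char_pow]; ring
        · ring) with hφYdef
  have hφYinj : Function.Injective φY := by
    intro x y hxy
    have h2 := congrArg Prod.snd hxy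
    simp only [hφYdef, mkLin_apply] at h2
    exact mul_left_cancel₀ (pow_ne_zero _ hν) h2
  refine ⟨LinearMap.range φY, X.prod S2, ?_, ?_, ?_, ?_, ?_⟩
  · rw [LinearMap.coe_range]; rfl
  · rw [Submodule.prod_coe]; rfl
  -- IsWZSpace Y
  · constructor
    · rw [LinearMap.finrank_range_of_inj hφYinj, GaloisField.finrank 2 hn0]
    · rintro p ⟨b, rfl⟩ hp0
      have hb0 : b ≠ 0 := by rintro rfl; exact hp0 (map_zero φY)
      have hB0 : ν ^ (2 ^ i + 1) * b ≠ 0 := mul_ne_zero (pow_ne_zero _ hν) hb0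
      show W n f (ν * (b + b ^ (2 ^ (n - i)))) (ν ^ (2 ^ i + 1) * b) = 0
      apply walsh_b hodd f hf g hg hB0
      set dB := g (ν ^ (2 ^ i + 1) * b) with hdBdef
      have hdBm : dB ^ (2 ^ i + 1) = (ν ^ (2 ^ i + 1) * b)⁻¹ := hg _
      have hdB0 : dB ≠ 0 := by
        intro h; rw [h, zero_pow hm0] at hdBm
        exact hB0 (inv_eq_zero.mp hdBm.symm)
      set e := (ν * dB)⁻¹ with hedef
      have he0 : e ≠ 0 := inv_ne_zero (mul_ne_zero hν hdB0)
      have hbe : b = e ^ (2 ^ i + 1) := by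
        rw [hedef, inv_pow, mul_pow, hdBm, mul_inv, inv_inv,
          inv_mul_cancel_left₀ (pow_ne_zero _ hν)]
      have hνdB : ν * dB = e⁻¹ := by rw [hedef, inv_inv]
      have hen : e ^ (2 ^ n) = e := pow_card hn0 e
      have hexpe : (e ^ (2 ^ i + 1)) ^ (2 ^ (n - i)) = e * e ^ (2 ^ (n - i)) := by
        have he' : (2 ^ i + 1) * 2 ^ (n - i) = 2 ^ n + 2 ^ (n - i) := by
          rw [add_mul, one_mul, ← pow_add]
          congr 2
          omega
        rw [← pow_mul, he', pow_add, hen]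
      have hkey : (ν * (b + b ^ (2 ^ (n - i)))) * dB = e ^ (2 ^ i) + e ^ (2 ^ (n - i)) := by
        have e1 : (ν * (b + b ^ (2 ^ (n - i)))) * dB = (b + b ^ (2 ^ (n - i))) * (ν * dB) := by
          ring
        rw [e1, hνdB, hbe, hexpe, pow_succ]
        field_simp
      rw [hkey, Tr_add, Tr_pow2, Tr_pow2, CharTwo.add_self_eq_zero]
  -- IsWZSpace Z
  · have hd1_0 : (c⁻¹ : GaloisField 2 n) ≠ 0 := inv_ne_zero hc0
    set f1 : GaloisField 2 n →ₗ[ZMod 2] ZMod 2 :=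
      mkLin (fun x => Tr n (c⁻¹ * x))
        (by intro x y; show Tr n (c⁻¹ * (x + y)) = _; rw [mul_add, Tr_add]) with hf1def
    set f2 : GaloisField 2 n →ₗ[ZMod 2] ZMod 2 :=
      mkLin (fun x => Tr n (d2 * x))
        (by intro x y; show Tr n (d2 * (x + y)) = _; rw [mul_add, Tr_add]) with hf2def
    set Φ := f1.prod f2 with hΦdef
    have hΦapp : ∀ x, Φ x = (Tr n (c⁻¹ * x), Tr n (d2 * x)) := fun x => rfl
    have hXker : X = LinearMap.ker Φ := by
      ext x
      rw [LinearMap.mem_ker, hΦapp, Prod.mk_eq_zero, hXmem]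
      constructor
      · intro hx
        exact ⟨hx c⁻¹ ⟨μ, hμS, hgμ⟩, hx d2 ⟨ξ * μ, hξμS, rfl⟩⟩
      · rintro ⟨h1, h2⟩ a ⟨s, hs, rfl⟩
        rcases span_pair_cases μ (ξ * μ) s hs with rfl | rfl | rfl | rfl
        · rw [hg0, zero_mul, Tr_zero]
        · rw [hgμ]; exact h1
        · exact h2
        · rw [hd3, add_mul, Tr_add, h1, h2, add_zero]
    have hcd0 : c⁻¹ + d2 ≠ 0 := by
      rw [hd2u, ← mul_one_add]
      exact mul_ne_zero hd1_0 h1u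
    have e1 : f1 c = 1 := by
      show Tr n (c⁻¹ * c) = 1
      rw [inv_mul_cancel₀ hc0, Tr_one hodd]
    have e2 : f2 d2⁻¹ = 1 := by
      show Tr n (d2 * d2⁻¹) = 1
      rw [mul_inv_cancel₀ hd2_0, Tr_one hodd]
    have e3 : f1 (c⁻¹ + d2)⁻¹ + f2 (c⁻¹ + d2)⁻¹ = 1 := by
      show Tr n (c⁻¹ * (c⁻¹ + d2)⁻¹) + Tr n (d2 * (c⁻¹ + d2)⁻¹) = 1
      rw [← Tr_add, ← add_mul, mul_inv_cancel₀ hcd0, Tr_one hodd]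
    have hmain : ∀ x10 x01 : GaloisField 2 n,
        Φ x10 = (1, 0) → Φ x01 = (0, 1) → Function.Surjective Φ := by
      intro x10 x01 h10 h01 t
      refine ⟨t.1 • x10 + t.2 • x01, ?_⟩
      rw [map_add, map_smul, map_smul, h10, h01]
      rcases zmod2_cases t.1 with ht1 | ht1 <;> rcases zmod2_cases t.2 with ht2 | ht2 <;>
        rw [ht1, ht2] <;>
        simp [Prod.ext_iff, Prod.smul_mk] <;>
        exact ⟨ht1.symm, ht2.symm⟩
    have hΦsurj : Function.Surjective Φ := by
      rcases zmod2_cases (f2 c) with hs | hs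
      · have hΦc : Φ c = (1, 0) := by rw [hΦapp]; exact Prod.ext e1 hs
        rcases zmod2_cases (f1 d2⁻¹) with hr | hr
        · exact hmain c d2⁻¹ hΦc (by rw [hΦapp]; exact Prod.ext hr e2)
        · refine hmain c (d2⁻¹ + c) hΦc ?_
          rw [map_add]
          have hΦd : Φ d2⁻¹ = (1, 1) := by rw [hΦapp]; exact Prod.ext hr e2
          rw [hΦd, hΦc]
          refine Prod.ext ?_ ?_ <;> simp <;> decide
      · have hΦc : Φ c = (1, 1) := by rw [hΦapp]; exact Prod.ext e1 hs
        rcases zmod2_cases (f1 (c⁻¹ + d2)⁻¹) with hp | hp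
        · have hq : f2 (c⁻¹ + d2)⁻¹ = 1 := by rwa [hp, zero_add] at e3
          have hΦ3 : Φ (c⁻¹ + d2)⁻¹ = (0, 1) := by rw [hΦapp]; exact Prod.ext hp hq
          refine hmain (c + (c⁻¹ + d2)⁻¹) (c⁻¹ + d2)⁻¹ ?_ hΦ3
          rw [map_add, hΦc, hΦ3]
          refine Prod.ext ?_ ?_ <;> simp <;> decide
        · have hq : f2 (c⁻¹ + d2)⁻¹ = 0 := by
            have := e3
            rw [hp] at this
            rcases zmod2_cases (f2 (c⁻¹ + d2)⁻¹) with h | h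
            · exact h
            · rw [h] at this; exact absurd this (by decide)
          have hΦ3 : Φ (c⁻¹ + d2)⁻¹ = (1, 0) := by rw [hΦapp]; exact Prod.ext hp hq
          refine hmain (c⁻¹ + d2)⁻¹ (c + (c⁻¹ + d2)⁻¹) hΦ3 ?_
          rw [map_add, hΦc, hΦ3]
          refine Prod.ext ?_ ?_ <;> simp <;> decide
    have hrange : LinearMap.range Φ = ⊤ := LinearMap.range_eq_top.mpr hΦsurj
    have hXrank : Module.finrank (ZMod 2) X + 2 = n := by
      have hrn := LinearMap.finrank_range_add_finrank_ker Φ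
      rw [hrange, finrank_top, GaloisField.finrank 2 hn0] at hrn
      rw [show Module.finrank (ZMod 2) (ZMod 2 × ZMod 2) = 2 from by
        simp [Module.finrank_prod]] at hrn
      rw [hXker]
      omega
    have hindep : LinearIndependent (ZMod 2) ![μ, ξ * μ] := by
      rw [LinearIndependent.pair_iff]
      intro s t hst
      rcases zmod2_cases s with rfl | rfl <;> rcases zmod2_cases t with rfl | rfl
      · exact ⟨rfl, rfl⟩
      · rw [zero_smul, one_smul, zero_add] at hst
        exact ((mul_ne_zero hξ0 hμ) hst).elim
      · rw [one_smul, zero_smul, add_zero] at hst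
        exact (hμ hst).elim
      · rw [one_smul, one_smul] at hst
        exact (hμξμ0 hst).elim
    have hS2rank : Module.finrank (ZMod 2) S2 = 2 := by
      have hr : Set.range ![μ, ξ * μ] = {μ, ξ * μ} := by
        simp [Matrix.range_cons, Matrix.range_empty, Set.pair_comm]
      have hfr := finrank_span_eq_card hindep
      rw [hr] at hfr
      rw [hS2def, hfr]
      simp
    constructor
    · rw [LinearEquiv.finrank_eq (prodSubEquiv X S2), Module.finrank_prod, hS2rank]
      omega
    · rintro p hp hp0
      rw [Submodule.mem_prod] at hp
      obtain ⟨hp1, hp2⟩ := hp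
      rcases eq_or_ne p.2 0 with h0 | hB
      · have hp10 : p.1 ≠ 0 := by
          intro h; exact hp0 (Prod.ext h h0)
        rw [show p.2 = 0 from h0]
        exact walsh_a (i := i) hodd f hf hp10
      · apply walsh_b hodd f hf g hg hB
        rw [mul_comm]
        exact hp1 (g p.2) ⟨p.2, hp2, rfl⟩
  -- trivial intersection
  · apply Set.eq_of_subset_of_subset
    · rintro p ⟨hpY, hpZ⟩
      rw [SetLike.mem_coe] at hpY hpZ
      obtain ⟨b, rfl⟩ := hpY
      rw [Submodule.mem_prod] at hpZ
      obtain ⟨h1, h2⟩ := hpZ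
      have hp2 : (φY b).2 = ν ^ (2 ^ i + 1) * b := rfl
      have hp1 : (φY b).1 = ν * (b + b ^ (2 ^ (n - i))) := rfl
      -- general contradiction machinery for nonzero cases
      have hcontr : ∀ σ : GaloisField 2 n, σ + σ ^ (2 ^ i) = ξ + ξ ^ (2 ^ i) →
          b = σ * T ^ (2 ^ i + 1) → Tr n (c⁻¹ * (φY b).1) = 1 := by
        intro σ hσ hbval
        rw [hp1, hbval, halg σ, htrs σ, hσ]
        exact htr'
      have hbval : ∀ σ : GaloisField 2 n, ν ^ (2 ^ i + 1) * b = σ * μ →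
          b = σ * T ^ (2 ^ i + 1) := by
        intro σ hB
        apply mul_left_cancel₀ (pow_ne_zero (2 ^ i + 1) hν)
        rw [hB, show ν ^ (2 ^ i + 1) * (σ * T ^ (2 ^ i + 1)) = σ * (ν * T) ^ (2 ^ i + 1) from by
          rw [mul_pow]; ring]
        rw [show ν * T = c from by rw [hTdef]; field_simp, hc]
      rcases span_pair_cases μ (ξ * μ) _ (hp2 ▸ h2) with hB | hB | hB | hB
      · -- b = 0
        have hb0 : b = 0 := by
          rcases mul_eq_zero.mp hB with h | h
          · exact ((pow_ne_zero _ hν) h).elim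
          · exact h
        rw [hb0, map_zero]
        rfl
      · -- second coordinate μ : use functional d2 = g (ξ μ)
        exfalso
        have hbv : b = 1 * T ^ (2 ^ i + 1) := hbval 1 (by rw [hB, one_mul])
        have hzero : Tr n (d2 * (φY b).1) = 0 := h1 d2 ⟨ξ * μ, hξμS, rfl⟩
        have hone : Tr n (d2 * (φY b).1) = 1 := by
          have halg1 : c⁻¹ * (φY b).1 = T ^ (2 ^ i) + T ^ (2 ^ (n - i)) := by
            rw [hp1, hbv, halg 1, one_mul, one_mul]
          have hrw : d2 * (φY b).1 = u * (T ^ (2 ^ i) + T ^ (2 ^ (n - i))) := by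
            rw [← halg1, hd2u]
            ring
          rw [hrw, mul_add, Tr_add]
          have s1 : Tr n (u * T ^ (2 ^ (n - i))) = Tr n (u ^ (2 ^ (2 * i)) * T ^ (2 ^ i)) := by
            rw [← Tr_pow2 i (u * T ^ (2 ^ (n - i))), mul_pow, ← pow_mul T]
            rw [show 2 ^ (n - i) * 2 ^ i = 2 ^ n from by rw [← pow_add]; congr 1; omega,
              pow_card hn0]
            rw [← Tr_pow2 i (u ^ (2 ^ i) * T), mul_pow, ← pow_mul u]
            rw [show 2 ^ i * 2 ^ i = 2 ^ (2 * i) from by rw [← pow_add, two_mul]]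
          rw [s1, ← Tr_add, ← add_mul, hkey2]
          exact htr'
        rw [hzero] at hone
        exact absurd hone (by decide)
      · -- second coordinate ξ μ : use functional c⁻¹ = g μ
        exfalso
        have hbv : b = ξ * T ^ (2 ^ i + 1) := hbval ξ hB
        have hzero : Tr n (c⁻¹ * (φY b).1) = 0 := h1 c⁻¹ ⟨μ, hμS, hgμ⟩
        have hone := hcontr ξ rfl hbv
        rw [hzero] at hone
        exact absurd hone (by decide)
      · -- second coordinate μ + ξ μ
        exfalso
        have hbv : b = (1 + ξ) * T ^ (2 ^ i + 1) := hbval (1 + ξ) (by rw [hB]; ring)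
        have hσ : (1 + ξ) + (1 + ξ) ^ (2 ^ i) = ξ + ξ ^ (2 ^ i) := by
          rw [add_pow_char_pow, one_pow]
          linear_combination h2F
        have hzero : Tr n (c⁻¹ * (φY b).1) = 0 := h1 c⁻¹ ⟨μ, hμS, hgμ⟩
        have hone := hcontr (1 + ξ) hσ hbv
        rw [hzero] at hone
        exact absurd hone (by decide)
    · intro p hp
      rw [Set.mem_singleton_iff] at hp
      subst hp
      constructor
      · rw [SetLike.mem_coe]
        exact zero_mem _
      · rw [SetLike.mem_coe]
        exact zero_mem _
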